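/- arXiv:1805.03794 — 2 statements merged into one kernel-verified Lean document; each statement's English description precedes it below -/
import Mathlib

section
/- If a mass-action reaction network is complex balanced at a positive concentration vector c (i.e., A·Ψ(c) = 0, equivalently for each complex C the total inflow rate ∑_{C'→C} a_{C'C}Ψ_{C'}(c) equals the total outflow rate ∑_{C→C'} a_{CC'}Ψ_C(c)), then the product-of-Poissonians weight π(n) = ∏_{i=1}^N (ω c_i)^{n_i}/n_i! is a stationary measure of the chemical master equation: ∑_j [f_j(n - V_j, ω)π(n - V_j) - f_j(n, ω)π(n)] = 0 for all n ∈ ℕ^N, where f_j(n,ω) = k_j ω^{1-∑_i s_{ij}} ∏_i n_i!/(n_i - s_{ij})! is the mass-action propensity (zero when some n_i < s_{ij}) and V_j = r_{·j} - s_{·j}. -/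
/-!
With `x = ω c`, the identity `n!/(n-y)! · x^n/n! = x^y · x^(n-y)/(n-y)!` shows that the flux
`f_j(m) π(m)` equals `ω k_j Ψ_{s_j}(c) π(m - s_j)`. Hence the master-equation balance at `n` is
`ω ∑_j k_j Ψ_{s_j}(c) (π(n - r_j) - π(n - s_j))`; grouping the reactions by the complex `y` in
`π(n - y)`, the coefficient of each `π(n - y)` is inflow minus outflow at `y`, which vanishes by
complex balance.
-/

open Finset

theorem descFactorial_mul_pow_div_factorial {K : Type*} [Field K] [CharZero K] (x : K) {a b : ℕ}
    (h : b ≤ a) :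
    (a.descFactorial b : K) * (x ^ a / a.factorial) = x ^ b * (x ^ (a - b) / (a - b).factorial) := by
  have hfact : ((a - b).factorial * a.descFactorial b : K) = a.factorial := by
    exact_mod_cast Nat.factorial_mul_descFactorial h
  have hpow : x ^ a = x ^ b * x ^ (a - b) := by rw [← pow_add, Nat.add_sub_cancel' h]
  have hdesc : (a.descFactorial b : K) ≠ 0 :=
    Nat.cast_ne_zero.2 fun h0 => (Nat.descFactorial_eq_zero_iff_lt.1 h0).not_ge h
  rw [hpow, ← hfact]
  field_simp

theorem sum_mul_comp_eq_of_fiber_sums_eq {ι κ R : Type*} [Fintype ι] [DecidableEq κ]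
    [CommSemiring R] (w : ι → R) (r s : ι → κ) (g : κ → R)
    (hw : ∀ y, ∑ j with r j = y, w j = ∑ j with s j = y, w j) :
    ∑ j, w j * g (r j) = ∑ j, w j * g (s j) := by
  have regroup : ∀ t : ι → κ, (∀ j, t j ∈ image r univ ∪ image s univ) →
      ∑ j, w j * g (t j) = ∑ y ∈ image r univ ∪ image s univ, (∑ j with t j = y, w j) * g y := by
    intro t ht
    rw [← sum_fiberwise_of_maps_to (fun j _ => ht j)]
    refine sum_congr rfl fun y _ => ?_
    rw [sum_mul]
    exact sum_congr rfl fun j hj => by rw [(mem_filter.1 hj).2]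
  rw [regroup r (fun j => mem_union_left _ (mem_image_of_mem r (mem_univ j))),
    regroup s (fun j => mem_union_right _ (mem_image_of_mem s (mem_univ j)))]
  exact sum_congr rfl fun y _ => by rw [hw y]

theorem zpow_one_sub_sum_mul_prod_mul_pow {σ K : Type*} [Fintype σ] [Field K] {ω : K}
    (hω : ω ≠ 0) (c : σ → K) (y : σ → ℕ) :
    ω ^ ((1 : ℤ) - ∑ i, (y i : ℤ)) * ∏ i, (ω * c i) ^ y i = ω * ∏ i, c i ^ y i := by
  rw [prod_congr rfl fun i _ => mul_pow ω (c i) (y i), prod_mul_distrib, prod_pow_eq_pow_sum,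
    ← mul_assoc, ← zpow_natCast, ← zpow_add₀ hω]
  push_cast
  simp

section MassAction

variable {σ : Type*} [Fintype σ]

noncomputable def poissonProduct (x : σ → ℝ) (n : σ → ℤ) : ℝ :=
  if ∀ i, 0 ≤ n i then ∏ i, x i ^ (n i).toNat / ((n i).toNat.factorial : ℝ) else 0

noncomputable def massActionPropensity (κ ω : ℝ) (y : σ → ℕ) (n : σ → ℤ) : ℝ :=
  if ∀ i, 0 ≤ n i then
    κ * ω ^ ((1 : ℤ) - ∑ i, (y i : ℤ)) * ∏ i, ((n i).toNat.descFactorial (y i) : ℝ)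
  else 0

theorem massActionPropensity_mul_poissonProduct (κ ω : ℝ) (x : σ → ℝ) (y : σ → ℕ)
    (m : σ → ℤ) :
    massActionPropensity κ ω y m * poissonProduct x m =
      κ * ω ^ ((1 : ℤ) - ∑ i, (y i : ℤ)) * (∏ i, x i ^ y i) *
        poissonProduct x (fun i => m i - y i) := by
  unfold massActionPropensity poissonProduct
  by_cases hym : ∀ i, (y i : ℤ) ≤ m i
  · have hm : ∀ i, 0 ≤ m i := fun i => (Int.natCast_nonneg _).trans (hym i)
    have hmy : ∀ i, 0 ≤ m i - y i := fun i => sub_nonneg.2 (hym i)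
    rw [if_pos hm, if_pos hm, if_pos hmy]
    have hprod : (∏ i, ((m i).toNat.descFactorial (y i) : ℝ)) *
          ∏ i, x i ^ (m i).toNat / ((m i).toNat.factorial : ℝ) =
        (∏ i, x i ^ y i) * ∏ i, x i ^ (m i - y i).toNat / ((m i - y i).toNat.factorial : ℝ) := by
      rw [← prod_mul_distrib, ← prod_mul_distrib]
      refine prod_congr rfl fun i _ => ?_
      have hle : y i ≤ (m i).toNat := by have := hym i; omega
      have hsub : (m i).toNat - y i = (m i - y i).toNat := by omega
      rw [descFactorial_mul_pow_div_factorial _ hle, hsub]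
    linear_combination κ * ω ^ ((1 : ℤ) - ∑ i, (y i : ℤ)) * hprod
  · obtain ⟨i₀, hi₀⟩ := not_forall.1 hym
    have hmy : ¬ ∀ i, 0 ≤ m i - y i := fun h => hi₀ (sub_nonneg.1 (h i₀))
    rw [if_neg hmy, mul_zero]
    split_ifs with hm
    · have hlt : (m i₀).toNat < y i₀ := by have := hm i₀; omega
      rw [prod_eq_zero (mem_univ i₀) (by rw [Nat.descFactorial_eq_zero_iff_lt.2 hlt]; simp)]
      ring
    · rw [zero_mul]

end MassAction

open Classical in
theorem anderson_craciun_kurtz_general (N K : ℕ)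
    (s r : Fin K → Fin N → ℕ) (k : Fin K → ℝ)
    (c : Fin N → ℝ) (ω : ℝ) (hω : 0 < ω)
    -- complex balance at c:
    (hcb : ∀ y : Fin N → ℕ,
      ∑ j ∈ Finset.univ.filter (fun j => r j = y), k j * ∏ i, c i ^ (s j i)
        = ∑ j ∈ Finset.univ.filter (fun j => s j = y), k j * ∏ i, c i ^ (s j i))
    -- mass-action propensity (zero when some n_i < s_{ij} or n has a negative entry):
    (f : Fin K → (Fin N → ℤ) → ℝ)
    (hf : ∀ j n, f j n =
      if ∀ i, 0 ≤ n i then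
        k j * ω ^ ((1 : ℤ) - ∑ i, (s j i : ℤ)) *
          ∏ i, (Nat.descFactorial (n i).toNat (s j i) : ℝ)
      else 0)
    -- the product-of-Poissonians weight:
    (π : (Fin N → ℤ) → ℝ)
    (hπ : ∀ n, π n =
      if ∀ i, 0 ≤ n i then
        ∏ i, (ω * c i) ^ (n i).toNat / (Nat.factorial (n i).toNat : ℝ)
      else 0) :
    ∀ n : Fin N → ℤ, (∀ i, 0 ≤ n i) →
      ∑ j, (f j (fun i => n i - ((r j i : ℤ) - (s j i : ℤ))) *
              π (fun i => n i - ((r j i : ℤ) - (s j i : ℤ)))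
            - f j n * π n) = 0 := by
  intro n _
  set P : (Fin N → ℕ) → ℝ := fun y => poissonProduct (fun i => ω * c i) (fun i => n i - y i)
  have flux : ∀ j m, f j m * π m =
      ω * (k j * ∏ i, c i ^ s j i) * poissonProduct (fun i => ω * c i) (fun i => m i - s j i) := by
    intro j m
    -- `hf` and `hπ` decide their `if` by `Nat.decidableForallFin`, hence `congr` rather than `rfl`.
    have hf' : f j m = massActionPropensity (k j) ω (s j) m := by
      rw [hf, massActionPropensity]; congr
    have hπ' : π m = poissonProduct (fun i => ω * c i) m := by
      rw [hπ, poissonProduct]; congr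
    rw [hf', hπ', massActionPropensity_mul_poissonProduct, mul_assoc (k j),
      zpow_one_sub_sum_mul_prod_mul_pow hω.ne']
    ring
  calc ∑ j, (f j (fun i => n i - ((r j i : ℤ) - (s j i : ℤ))) *
              π (fun i => n i - ((r j i : ℤ) - (s j i : ℤ))) - f j n * π n)
      = ω * ∑ j, (k j * ∏ i, c i ^ s j i) * (P (r j) - P (s j)) := by
        rw [mul_sum]
        refine sum_congr rfl fun j _ => ?_
        have shift : (fun i => (n i - ((r j i : ℤ) - s j i)) - s j i) = fun i => n i - r j i := by
          funext i; ring
        simp only [flux, shift, P]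
        ring
    _ = 0 := by
        rw [sum_congr rfl fun j _ => mul_sub _ (P (r j)) (P (s j)), sum_sub_distrib,
          sum_mul_comp_eq_of_fiber_sums_eq _ r s P hcb, sub_self, mul_zero]

open Classical in
/-- Anderson–Craciun–Kurtz: if a mass-action network with reactions
`∑_i s_{ij} X_i → ∑_i r_{ij} X_i` (rates `k_j`) is complex balanced at
`c ∈ ℝ_{>0}^N` (for each complex `y`, total inflow `∑_{j : r_j = y} k_j Ψ_{s_j}(c)`
equals total outflow `∑_{j : s_j = y} k_j Ψ_{s_j}(c)`), then the
product-of-Poissonians weight `π(n) = ∏_i (ω c_i)^{n_i}/n_i!` is stationary for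
the chemical master equation. -/
theorem anderson_craciun_kurtz (N K : ℕ)
    (s r : Fin K → Fin N → ℕ) (k : Fin K → ℝ) (hk : ∀ j, 0 < k j)
    (c : Fin N → ℝ) (hc : ∀ i, 0 < c i) (ω : ℝ) (hω : 0 < ω)
    -- complex balance at c:
    (hcb : ∀ y : Fin N → ℕ,
      ∑ j ∈ Finset.univ.filter (fun j => r j = y), k j * ∏ i, c i ^ (s j i)
        = ∑ j ∈ Finset.univ.filter (fun j => s j = y), k j * ∏ i, c i ^ (s j i))
    -- mass-action propensity (zero when some n_i < s_{ij} or n has a negative entry):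
    (f : Fin K → (Fin N → ℤ) → ℝ)
    (hf : ∀ j n, f j n =
      if ∀ i, 0 ≤ n i then
        k j * ω ^ ((1 : ℤ) - ∑ i, (s j i : ℤ)) *
          ∏ i, (Nat.descFactorial (n i).toNat (s j i) : ℝ)
      else 0)
    -- the product-of-Poissonians weight:
    (π : (Fin N → ℤ) → ℝ)
    (hπ : ∀ n, π n =
      if ∀ i, 0 ≤ n i then
        ∏ i, (ω * c i) ^ (n i).toNat / (Nat.factorial (n i).toNat : ℝ)
      else 0) :
    ∀ n : Fin N → ℤ, (∀ i, 0 ≤ n i) →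
      ∑ j, (f j (fun i => n i - ((r j i : ℤ) - (s j i : ℤ))) *
              π (fun i => n i - ((r j i : ℤ) - (s j i : ℤ)))
            - f j n * π n) = 0 :=
  anderson_craciun_kurtz_general N K s r k c ω hω hcb f hf π hπ
end

section
/- For a complex balanced reaction network, the product over all voxels of Poisson weights with the same rates ω c_i is a stationary distribution of the reaction-diffusion master equation (reactions occurring independently in each voxel plus diffusion jumps between neighboring voxels at arbitrary rates d_i ≥ 0). Consequently the stationary distribution of the total molecule numbers n̂ = ∑_v n_v equals N_Γ ∏_i (Ω c_i)^{n̂_i}/n̂_i! with Ω = |V|ω, and is independent of the diffusion rates d_i and of the number of voxels. -/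
/-!
The product Poisson weight `π` with rates `ω c_i` in every voxel satisfies detailed balance for
each diffusion jump, because all voxels carry the same rates; summed over ordered pairs of
neighbours the jump terms cancel by symmetry of the neighbour relation.

For reactions, `π` turns the inflow into `n` through `y → y'` fired in voxel `v` into
`k c^y · ω (n_v)_{y'} / (ω c)^{y'} · π n`, and the outflow through `y → y'` into the same
expression with `y` in place of `y'`. Grouping reactions by complex, complex balance makes
inflow and outflow cancel in every voxel.

The marginal is the multinomial theorem: summing `∏_v λ^{m_v} / m_v!` over all `m` with
`∑_v m_v = n̂` gives `(|V| λ)^{n̂} / n̂!`.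
-/

open Finset
open scoped Nat

noncomputable section

/-- Extended by zero to negative counts, so that shifted states leaving `ℕ` carry no weight. -/
def poissonWeight (l : ℝ) (m : ℤ) : ℝ :=
  if 0 ≤ m then l ^ m.toNat / m.toNat ! else 0

section PoissonWeight

variable {l : ℝ}

lemma poissonWeight_natCast (l : ℝ) (a : ℕ) : poissonWeight l a = l ^ a / a ! := by
  simp [poissonWeight]

lemma poissonWeight_of_neg {m : ℤ} (hm : m < 0) : poissonWeight l m = 0 :=
  if_neg hm.not_ge

lemma add_one_mul_poissonWeight_add_one (l : ℝ) (m : ℤ) :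
    ((m : ℝ) + 1) * poissonWeight l (m + 1) = l * poissonWeight l m := by
  rcases lt_or_ge m 0 with hm | hm
  · rw [poissonWeight_of_neg hm, mul_zero]
    rcases (show m = -1 ∨ m + 1 < 0 by omega) with rfl | hm'
    · norm_num
    · rw [poissonWeight_of_neg hm', mul_zero]
  · lift m to ℕ using hm
    rw [← Nat.cast_succ, poissonWeight_natCast, poissonWeight_natCast, Nat.factorial_succ, pow_succ]
    push_cast
    field_simp

lemma descFactorial_mul_poissonWeight_sub (hl : l ≠ 0) {m : ℤ} (hm : 0 ≤ m) (r s : ℕ) :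
    (((m - ((r : ℤ) - s)).toNat.descFactorial s : ℕ) : ℝ) * poissonWeight l (m - ((r : ℤ) - s))
      = l ^ s * ((m.toNat.descFactorial r : ℝ) / l ^ r * poissonWeight l m) := by
  lift m to ℕ using hm with a
  rw [Int.toNat_natCast]
  rcases le_or_gt r a with hra | hra
  · obtain ⟨b, rfl⟩ := Nat.exists_eq_add_of_le' hra
    have hb : ((b + r : ℕ) : ℤ) - ((r : ℤ) - s) = ((b + s : ℕ) : ℤ) := by push_cast; ring
    rw [hb, Int.toNat_natCast, poissonWeight_natCast, poissonWeight_natCast]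
    have hs := Nat.factorial_mul_descFactorial (Nat.le_add_left s b)
    have hr := Nat.factorial_mul_descFactorial (Nat.le_add_left r b)
    rw [Nat.add_sub_cancel] at hs hr
    rw [← hs, ← hr]
    push_cast
    field_simp
    ring
  · rw [Nat.descFactorial_eq_zero_iff_lt.2 hra, Nat.cast_zero, zero_div, zero_mul, mul_zero]
    rcases lt_or_ge ((a : ℤ) - ((r : ℤ) - s)) 0 with hneg | hnn
    · rw [poissonWeight_of_neg hneg, mul_zero]
    · rw [Nat.descFactorial_eq_zero_iff_lt.2 (by omega), Nat.cast_zero, zero_mul]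

end PoissonWeight

section ProductPoisson

variable {V ι : Type*} [Fintype V] [Fintype ι]

def productPoisson (l : ι → ℝ) (n : V → ι → ℤ) : ℝ :=
  ∏ v, ∏ i, poissonWeight (l i) (n v i)

lemma productPoisson_eq_zero_of_neg (l : ι → ℝ) {n : V → ι → ℤ} {v : V} {i : ι}
    (h : n v i < 0) : productPoisson l n = 0 :=
  prod_eq_zero (mem_univ v) (prod_eq_zero (mem_univ i) (poissonWeight_of_neg h))

lemma ite_prod_eq_productPoisson (l : ι → ℝ) (n : V → ι → ℤ) [Decidable (∀ v i, 0 ≤ n v i)] :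
    (if ∀ v i, 0 ≤ n v i then ∏ v, ∏ i, l i ^ (n v i).toNat / ((n v i).toNat ! : ℝ) else 0)
      = productPoisson l n := by
  split_ifs with h
  · exact prod_congr rfl fun v _ => prod_congr rfl fun i _ => (if_pos (h v i)).symm
  · push Not at h
    obtain ⟨v, i, hvi⟩ := h
    exact (productPoisson_eq_zero_of_neg l hvi).symm

lemma ite_mul_productPoisson (l : ι → ℝ) (n : V → ι → ℤ) [Decidable (∀ v i, 0 ≤ n v i)]
    (a : ℝ) :
    (if ∀ v i, 0 ≤ n v i then a else 0) * productPoisson l n = a * productPoisson l n := by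
  split_ifs with h
  · rfl
  · push Not at h
    obtain ⟨v, i, hvi⟩ := h
    rw [productPoisson_eq_zero_of_neg l hvi, mul_zero, mul_zero]

lemma add_one_mul_prod_poissonWeight_add_single [DecidableEq ι] (l : ι → ℝ) (m : ι → ℤ) (p : ι) :
    ((m p : ℝ) + 1) * ∏ x, poissonWeight (l x) (m x + if x = p then 1 else 0)
      = l p * ∏ x, poissonWeight (l x) (m x) := by
  rw [Fintype.prod_eq_mul_prod_compl p, Fintype.prod_eq_mul_prod_compl p, if_pos rfl,
    ← mul_assoc, ← mul_assoc, add_one_mul_poissonWeight_add_one]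
  congr 1
  exact prod_congr rfl fun x hx => by rw [if_neg (mem_compl.1 hx ∘ mem_singleton.2), add_zero]

lemma sum_sum_sub_eq_zero_of_symm {M : Type*} [AddCommGroup M] (Ne : V → Finset V)
    (hsym : ∀ v v', v' ∈ Ne v ↔ v ∈ Ne v') (F : V → M) :
    ∑ v, ∑ v' ∈ Ne v, (F v' - F v) = 0 := by
  simp only [sum_sub_distrib]
  exact sub_eq_zero.2 (sum_comm' fun v v' => by simp [hsym v v'])

variable [DecidableEq V] [DecidableEq ι]

lemma add_one_mul_productPoisson_jump (l : ι → ℝ) (n : V → ι → ℤ) {v v' : V} (hv : v ≠ v')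
    (i : ι) :
    ((n v i : ℝ) + 1) * productPoisson l (fun w j => n w j + (if w = v ∧ j = i then 1 else 0)
        - (if w = v' ∧ j = i then 1 else 0))
      = n v' i * productPoisson l n := by
  set m : V × ι → ℤ := fun x => n x.1 x.2 - if x = (v', i) then 1 else 0
  have hjump : ∀ x : V × ι, n x.1 x.2 + (if x.1 = v ∧ x.2 = i then 1 else 0)
      - (if x.1 = v' ∧ x.2 = i then 1 else 0) = m x + if x = (v, i) then 1 else 0 := by
    rintro ⟨w, j⟩
    simp only [m, Prod.mk.injEq]
    ring
  have hn : ∀ x : V × ι, n x.1 x.2 = m x + if x = (v', i) then 1 else 0 := fun x => by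
    simp only [m]; ring
  have hmv : ((n v i : ℤ) : ℝ) = m (v, i) := by simp [m, hv]
  have hmv' : ((n v' i : ℤ) : ℝ) = m (v', i) + 1 := by simp [m]
  simp only [productPoisson, ← Fintype.prod_prod_type' (fun w j => poissonWeight (l j) _)]
  rw [hmv, hmv']
  simp only [hjump]
  simp only [hn]
  exact (add_one_mul_prod_poissonWeight_add_single (fun x => l x.2) m (v, i)).trans
    (add_one_mul_prod_poissonWeight_add_single (fun x => l x.2) m (v', i)).symm

theorem sum_diffusion_productPoisson_eq_zero (Ne : V → Finset V)
    (hsym : ∀ v v', v' ∈ Ne v ↔ v ∈ Ne v') (hirr : ∀ v, v ∉ Ne v) (d l : ι → ℝ)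
    (n : V → ι → ℤ) :
    ∑ v, ∑ v' ∈ Ne v, ∑ i, d i * ((((n v i : ℤ) : ℝ) + 1) *
        productPoisson l (fun w j => n w j + (if w = v ∧ j = i then 1 else 0)
          - (if w = v' ∧ j = i then 1 else 0))
      - ((n v i : ℤ) : ℝ) * productPoisson l n) = 0 := by
  have hjumps : ∀ v, ∀ v' ∈ Ne v, ∑ i, d i * ((((n v i : ℤ) : ℝ) + 1) *
        productPoisson l (fun w j => n w j + (if w = v ∧ j = i then 1 else 0)
          - (if w = v' ∧ j = i then 1 else 0))
      - ((n v i : ℤ) : ℝ) * productPoisson l n)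
      = ∑ i, d i * n v' i * productPoisson l n - ∑ i, d i * n v i * productPoisson l n := by
    intro v v' hv'
    rw [← sum_sub_distrib]
    refine sum_congr rfl fun i _ => ?_
    rw [add_one_mul_productPoisson_jump l n (ne_of_mem_of_not_mem hv' (hirr v)).symm i]
    ring
  rw [sum_congr rfl fun v _ => sum_congr rfl (hjumps v)]
  exact sum_sum_sub_eq_zero_of_symm Ne hsym _

end ProductPoisson

section Reaction

variable {V ι : Type*} [Fintype V] [Fintype ι] [DecidableEq V]

def massActionRate (κ ω : ℝ) (y : ι → ℕ) (v : V) (n : V → ι → ℤ) : ℝ :=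
  κ * ω ^ ((1 : ℤ) - ∑ i, (y i : ℤ)) * ∏ i, ((n v i).toNat.descFactorial (y i) : ℝ)

lemma zpow_one_sub_sum_mul_prod_pow {ω : ℝ} (hω : ω ≠ 0) (c : ι → ℝ) (y : ι → ℕ) :
    ω ^ ((1 : ℤ) - ∑ i, (y i : ℤ)) * ∏ i, (ω * c i) ^ y i = ω * ∏ i, c i ^ y i := by
  simp only [mul_pow, prod_mul_distrib, prod_pow_eq_pow_sum]
  rw [zpow_sub₀ hω, zpow_one, ← Nat.cast_sum, zpow_natCast]
  field_simp

lemma massActionRate_mul_productPoisson_shift {ω : ℝ} (hω : ω ≠ 0) {c : ι → ℝ}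
    (hc : ∀ i, c i ≠ 0) (κ : ℝ) (y y' : ι → ℕ) (v : V) {n : V → ι → ℤ}
    (hn : ∀ w i, 0 ≤ n w i) :
    massActionRate κ ω y v (fun w i => n w i - if w = v then (y' i : ℤ) - y i else 0) *
        productPoisson (fun i => ω * c i)
          (fun w i => n w i - if w = v then (y' i : ℤ) - y i else 0)
      = (κ * ∏ i, c i ^ y i) * (ω * (∏ i, ((n v i).toNat.descFactorial (y' i) : ℝ) /
          (ω * c i) ^ y' i) * productPoisson (fun i => ω * c i) n) := by
  simp only [massActionRate, productPoisson]
  rw [Fintype.prod_eq_mul_prod_compl v, Fintype.prod_eq_mul_prod_compl v (f := fun w => ∏ i, _)]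
  simp only [↓reduceIte]
  have hrest : ∏ w ∈ {v}ᶜ, ∏ i, poissonWeight (ω * c i)
      (n w i - if w = v then (y' i : ℤ) - y i else 0)
      = ∏ w ∈ {v}ᶜ, ∏ i, poissonWeight (ω * c i) (n w i) :=
    prod_congr rfl fun w hw => by
      have : w ≠ v := fun h => mem_compl.1 hw (mem_singleton.2 h)
      simp [this]
  have hvoxel : (∏ i, (((n v i - ((y' i : ℤ) - y i)).toNat.descFactorial (y i) : ℕ) : ℝ)) *
      ∏ i, poissonWeight (ω * c i) (n v i - ((y' i : ℤ) - y i))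
      = (∏ i, (ω * c i) ^ y i) * ((∏ i, ((n v i).toNat.descFactorial (y' i) : ℝ) /
          (ω * c i) ^ y' i) * ∏ i, poissonWeight (ω * c i) (n v i)) := by
    simp only [← prod_mul_distrib]
    exact prod_congr rfl fun i _ =>
      descFactorial_mul_poissonWeight_sub (mul_ne_zero hω (hc i)) (hn v i) _ _
  rw [hrest]
  linear_combination (κ * ω ^ ((1 : ℤ) - ∑ i, (y i : ℤ)) *
      ∏ w ∈ {v}ᶜ, ∏ i, poissonWeight (ω * c i) (n w i)) * hvoxel
    + (κ * (∏ i, ((n v i).toNat.descFactorial (y' i) : ℝ) / (ω * c i) ^ y' i) *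
      (∏ i, poissonWeight (ω * c i) (n v i)) *
      ∏ w ∈ {v}ᶜ, ∏ i, poissonWeight (ω * c i) (n w i)) * zpow_one_sub_sum_mul_prod_pow hω c y

lemma sum_mul_sub_eq_zero_of_balanced {J Y R : Type*} [Fintype J] [DecidableEq Y] [CommRing R]
    (s r : J → Y) (a : J → R)
    (hbal : ∀ y, ∑ j ∈ univ.filter (fun j => r j = y), a j
      = ∑ j ∈ univ.filter (fun j => s j = y), a j)
    (G : Y → R) :
    ∑ j, a j * (G (r j) - G (s j)) = 0 := by
  set T := univ.image r ∪ univ.image s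
  have hfiber : ∀ g : J → Y, (∀ j, g j ∈ T) →
      ∑ j, a j * G (g j) = ∑ y ∈ T, (∑ j ∈ univ.filter (fun j => g j = y), a j) * G y := by
    intro g hg
    rw [← sum_fiberwise_of_maps_to fun j _ => hg j]
    refine sum_congr rfl fun y _ => ?_
    rw [sum_mul]
    exact sum_congr rfl fun j hj => by rw [(mem_filter.1 hj).2]
  simp only [mul_sub, sum_sub_distrib]
  rw [hfiber r fun j => mem_union_left _ (mem_image_of_mem r (mem_univ j)),
    hfiber s fun j => mem_union_right _ (mem_image_of_mem s (mem_univ j)), sub_eq_zero]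
  simp only [hbal]

theorem sum_reaction_productPoisson_eq_zero {J : Type*} [Fintype J] (s r : J → ι → ℕ)
    (k : J → ℝ) {c : ι → ℝ} (hc : ∀ i, c i ≠ 0) {ω : ℝ} (hω : ω ≠ 0)
    (hcb : ∀ y : ι → ℕ, ∑ j ∈ univ.filter (fun j => r j = y), k j * ∏ i, c i ^ s j i
      = ∑ j ∈ univ.filter (fun j => s j = y), k j * ∏ i, c i ^ s j i)
    {n : V → ι → ℤ} (hn : ∀ v i, 0 ≤ n v i) :
    ∑ v, ∑ j,
      (massActionRate (k j) ω (s j) v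
          (fun w i => n w i - if w = v then (r j i : ℤ) - s j i else 0) *
        productPoisson (fun i => ω * c i)
          (fun w i => n w i - if w = v then (r j i : ℤ) - s j i else 0)
      - massActionRate (k j) ω (s j) v n * productPoisson (fun i => ω * c i) n) = 0 := by
  refine sum_eq_zero fun v _ => ?_
  have houtflow := fun j => massActionRate_mul_productPoisson_shift hω hc (k j) (s j) (s j) v hn
  simp only [sub_self, ite_self, sub_zero] at houtflow
  simp only [massActionRate_mul_productPoisson_shift hω hc _ _ _ v hn, houtflow, ← mul_sub]
  exact sum_mul_sub_eq_zero_of_balanced s r _ hcb fun y => ω *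
    (∏ i, ((n v i).toNat.descFactorial (y i) : ℝ) / (ω * c i) ^ y i) *
      productPoisson (fun i => ω * c i) n

end Reaction

lemma sum_piAntidiag_prod_pow_div_factorial {α K : Type*} [DecidableEq α] [Field K] [CharZero K]
    (s : Finset α) (f : α → K) (t : ℕ) :
    ∑ m ∈ s.piAntidiag t, ∏ a ∈ s, f a ^ m a / (m a)! = (∑ a ∈ s, f a) ^ t / t ! := by
  rw [sum_pow_eq_sum_piAntidiag, sum_div]
  refine sum_congr rfl fun m hm => ?_
  have hspec : (∏ a ∈ s, ((m a)! : K)) * Nat.multinomial s m = t ! := by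
    rw [← (mem_piAntidiag.1 hm).1]
    exact_mod_cast Nat.multinomial_spec s m
  have hfact : ∏ a ∈ s, ((m a)! : K) ≠ 0 :=
    prod_ne_zero_iff.2 fun a _ => Nat.cast_ne_zero.2 (Nat.factorial_ne_zero _)
  rw [prod_div_distrib, eq_div_iff (Nat.cast_ne_zero.2 (Nat.factorial_ne_zero _)), ← hspec]
  field_simp

section Marginal

variable {V ι : Type*} [Fintype V] [DecidableEq V] [Fintype ι] [DecidableEq ι]

def totalCountEquiv (nhat : ι → ℕ) :
    {n : V → ι → ℕ // ∀ i, ∑ v, n v i = nhat i}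
      ≃ {x // x ∈ Fintype.piFinset fun i => (univ : Finset V).piAntidiag (nhat i)} :=
  (Equiv.piComm _).subtypeEquiv fun n => by simp [mem_piAntidiag, Equiv.piComm]

theorem tsum_productPoisson_totalCount (l : ι → ℝ) (nhat : ι → ℕ) :
    ∑' n : {n : V → ι → ℕ // ∀ i, ∑ v, n v i = nhat i},
        productPoisson l (fun v i => (n.1 v i : ℤ))
      = ∏ i, (Fintype.card V * l i) ^ nhat i / (nhat i)! := by
  rw [← (totalCountEquiv nhat).symm.tsum_eq]
  calc ∑' x : {x // x ∈ Fintype.piFinset fun i => (univ : Finset V).piAntidiag (nhat i)},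
        productPoisson l (fun v i => (x.1 i v : ℤ))
      = ∑ x ∈ Fintype.piFinset (fun i => (univ : Finset V).piAntidiag (nhat i)),
          ∏ i, ∏ v, l i ^ x i v / (x i v)! := by
        refine (Finset.tsum_subtype _
          fun x : ι → V → ℕ => productPoisson l fun v i => (x i v : ℤ)).trans ?_
        simp only [productPoisson, poissonWeight_natCast]
        exact sum_congr rfl fun x _ => prod_comm
    _ = ∏ i, (Fintype.card V * l i) ^ nhat i / (nhat i)! := by
        rw [← prod_univ_sum _ fun i (m : V → ℕ) => ∏ v, l i ^ m v / (m v)!]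
        simp only [sum_piAntidiag_prod_pow_div_factorial, sum_const, card_univ, nsmul_eq_mul]

end Marginal

end

open Classical in
theorem complex_balanced_rdme_stationary_general (V : Type) [Fintype V] [DecidableEq V]
    (N K : ℕ) (Ne : V → Finset V)
    (hsym : ∀ v v', v' ∈ Ne v ↔ v ∈ Ne v') (hirr : ∀ v, v ∉ Ne v)
    (s r : Fin K → Fin N → ℕ) (k : Fin K → ℝ)
    (c : Fin N → ℝ) (hc : ∀ i, 0 < c i) (ω : ℝ) (hω : 0 < ω)
    (d : Fin N → ℝ)
    -- complex balance at c:
    (hcb : ∀ y : Fin N → ℕ,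
      ∑ j ∈ Finset.univ.filter (fun j => r j = y), k j * ∏ i, c i ^ (s j i)
        = ∑ j ∈ Finset.univ.filter (fun j => s j = y), k j * ∏ i, c i ^ (s j i))
    -- per-voxel mass-action propensity:
    (f : V → Fin K → (V → Fin N → ℤ) → ℝ)
    (hf : ∀ v j n, f v j n =
      if ∀ w i, 0 ≤ n w i then
        k j * ω ^ ((1 : ℤ) - ∑ i, (s j i : ℤ)) *
          ∏ i, (Nat.descFactorial (n v i).toNat (s j i) : ℝ)
      else 0)
    -- product-of-Poissonians weight over all voxels:
    (P : (V → Fin N → ℤ) → ℝ)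
    (hP : ∀ n : V → Fin N → ℤ, P n =
      if ∀ v i, 0 ≤ n v i then
        ∏ v, ∏ i, (ω * c i) ^ (n v i).toNat / (Nat.factorial (n v i).toNat : ℝ)
      else 0) :
    -- (1) P is stationary for the full RDME generator:
    (∀ n : V → Fin N → ℤ, (∀ v i, 0 ≤ n v i) →
      (∑ v, ∑ v' ∈ Ne v, ∑ i,
        d i * ((((n v i : ℤ) : ℝ) + 1) *
            P (fun w j => n w j + (if w = v ∧ j = i then 1 else 0)
                - (if w = v' ∧ j = i then 1 else 0))
          - ((n v i : ℤ) : ℝ) * P n))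
      + (∑ v, ∑ j,
          (f v j (fun w i => n w i - (if w = v then (r j i : ℤ) - (s j i : ℤ) else 0)) *
             P (fun w i => n w i - (if w = v then (r j i : ℤ) - (s j i : ℤ) else 0))
           - f v j n * P n)) = 0)
    ∧
    -- (2) the marginal over total molecule numbers is the Poisson weight with
    -- rate Ω c_i, Ω = |V| ω, independent of the diffusion rates d:
    (∀ nhat : Fin N → ℕ,
      ∑' n : {n : V → Fin N → ℕ // ∀ i, ∑ v, n v i = nhat i},
          P (fun v i => (n.1 v i : ℤ)) =
        ∏ i, ((Fintype.card V : ℝ) * ω * c i) ^ (nhat i) /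
          (Nat.factorial (nhat i) : ℝ)) := by
  obtain rfl : P = productPoisson fun i => ω * c i :=
    funext fun n => (hP n).trans (ite_prod_eq_productPoisson _ n)
  have hfP : ∀ v j n, f v j n * productPoisson (fun i => ω * c i) n
      = massActionRate (k j) ω (s j) v n * productPoisson (fun i => ω * c i) n :=
    fun v j n => by rw [hf, ite_mul_productPoisson, massActionRate]
  refine ⟨fun n hn => ?_, fun nhat => ?_⟩
  · simp only [hfP]
    rw [sum_diffusion_productPoisson_eq_zero Ne hsym hirr, zero_add]
    exact sum_reaction_productPoisson_eq_zero s r k (fun i => (hc i).ne') hω.ne' hcb hn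
  · simp only [mul_assoc]
    exact tsum_productPoisson_totalCount _ nhat

open Classical in
/-- For a complex balanced network, the product over all voxels of Poisson
weights with the same rates `ω c_i` is stationary for the reaction-diffusion
master equation (per-voxel mass-action reactions plus diffusion jumps between
neighboring voxels at arbitrary rates `d_i ≥ 0`); moreover the induced
stationary weight of the total molecule numbers `n̂ = ∑_v n_v` equals
`∏_i (Ω c_i)^{n̂_i}/n̂_i!` with `Ω = |V| ω`, manifestly independent of the
diffusion rates `d_i`. -/
theorem complex_balanced_rdme_stationary (V : Type) [Fintype V] [DecidableEq V]
    (N K : ℕ) (Ne : V → Finset V)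
    (hsym : ∀ v v', v' ∈ Ne v ↔ v ∈ Ne v') (hirr : ∀ v, v ∉ Ne v)
    (s r : Fin K → Fin N → ℕ) (k : Fin K → ℝ) (hk : ∀ j, 0 < k j)
    (c : Fin N → ℝ) (hc : ∀ i, 0 < c i) (ω : ℝ) (hω : 0 < ω)
    (d : Fin N → ℝ) (hd : ∀ i, 0 ≤ d i)
    -- complex balance at c:
    (hcb : ∀ y : Fin N → ℕ,
      ∑ j ∈ Finset.univ.filter (fun j => r j = y), k j * ∏ i, c i ^ (s j i)
        = ∑ j ∈ Finset.univ.filter (fun j => s j = y), k j * ∏ i, c i ^ (s j i))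
    -- per-voxel mass-action propensity:
    (f : V → Fin K → (V → Fin N → ℤ) → ℝ)
    (hf : ∀ v j n, f v j n =
      if ∀ w i, 0 ≤ n w i then
        k j * ω ^ ((1 : ℤ) - ∑ i, (s j i : ℤ)) *
          ∏ i, (Nat.descFactorial (n v i).toNat (s j i) : ℝ)
      else 0)
    -- product-of-Poissonians weight over all voxels:
    (P : (V → Fin N → ℤ) → ℝ)
    (hP : ∀ n : V → Fin N → ℤ, P n =
      if ∀ v i, 0 ≤ n v i then
        ∏ v, ∏ i, (ω * c i) ^ (n v i).toNat / (Nat.factorial (n v i).toNat : ℝ)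
      else 0) :
    -- (1) P is stationary for the full RDME generator:
    (∀ n : V → Fin N → ℤ, (∀ v i, 0 ≤ n v i) →
      (∑ v, ∑ v' ∈ Ne v, ∑ i,
        d i * ((((n v i : ℤ) : ℝ) + 1) *
            P (fun w j => n w j + (if w = v ∧ j = i then 1 else 0)
                - (if w = v' ∧ j = i then 1 else 0))
          - ((n v i : ℤ) : ℝ) * P n))
      + (∑ v, ∑ j,
          (f v j (fun w i => n w i - (if w = v then (r j i : ℤ) - (s j i : ℤ) else 0)) *
             P (fun w i => n w i - (if w = v then (r j i : ℤ) - (s j i : ℤ) else 0))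
           - f v j n * P n)) = 0)
    ∧
    -- (2) the marginal over total molecule numbers is the Poisson weight with
    -- rate Ω c_i, Ω = |V| ω, independent of the diffusion rates d:
    (∀ nhat : Fin N → ℕ,
      ∑' n : {n : V → Fin N → ℕ // ∀ i, ∑ v, n v i = nhat i},
          P (fun v i => (n.1 v i : ℤ)) =
        ∏ i, ((Fintype.card V : ℝ) * ω * c i) ^ (nhat i) /
          (Nat.factorial (nhat i) : ℝ)) :=
  complex_balanced_rdme_stationary_general V N K Ne hsym hirr s r k c hc ω hω d hcb f hf P hP
end
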